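/- Let g(x) = Σ_{i=1}^{n} x_i^{2m_i} on a box D = [-a,a]ⁿ with integers 1 ≤ m₁ ≤ ⋯ ≤ m_n, and let f be continuous on D. Then lim_{t→0⁺} t^{-(1/(2m₁)+⋯+1/(2m_n))} ∫_D f(x) e^{-g(x)/t} dx = f(0) · ∏_{i=1}^n Γ(1/(2m_i))/m_i. -/

import Mathlib

/-!
Substituting `x_i = t^{1/(2 m_i)} y_i` rescales the phase `g(x) = Σ x_i^{2 m_i}` to `t g(y)`, and
its Jacobian `t^{Σ 1/(2 m_i)}` cancels the prefactor, so the quantity becomes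
`∫ 1_D f(t^{1/(2m)} y) e^{-g(y)} dy`. Since `f` is bounded on the compact box and continuous at the
interior point `0`, dominated convergence sends this to `f(0) ∫ e^{-g}`, which splits into the
one-dimensional integrals `∫ e^{-y^{2m}} dy = 2 Γ(1/(2m) + 1) = Γ(1/(2m))/m`.
-/

open Real Filter Set MeasureTheory Topology

theorem ContinuousOn.measurable_indicator {α β : Type*} [TopologicalSpace α] [MeasurableSpace α]
    [OpensMeasurableSpace α] [TopologicalSpace β] [MeasurableSpace β] [BorelSpace β] [Zero β]
    {f : α → β} {s : Set α} (hf : ContinuousOn f s) (hs : MeasurableSet s) :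
    Measurable (s.indicator f) := by
  classical
  rw [← piecewise_eq_indicator]
  exact hf.measurable_piecewise continuousOn_const hs

theorem ContinuousWithinAt.continuousAt_indicator {α β : Type*} [TopologicalSpace α]
    [TopologicalSpace β] [Zero β] {f : α → β} {s : Set α} {x : α} (hf : ContinuousWithinAt f s x)
    (hs : s ∈ 𝓝 x) : ContinuousAt (s.indicator f) x :=
  (hf.continuousAt hs).congr (eventuallyEq_of_mem hs fun _ hy => (indicator_of_mem hy f).symm)

theorem tendsto_rpow_nhdsGT_zero {p : ℝ} (hp : 0 < p) :
    Tendsto (fun t : ℝ => t ^ p) (𝓝[>] 0) (𝓝 0) := by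
  have h := (continuousAt_rpow_const 0 p (Or.inr hp.le)).tendsto
  rw [zero_rpow hp.ne'] at h
  exact h.mono_left nhdsWithin_le_nhds

theorem integral_comp_mul_pi {ι E : Type*} [Fintype ι] [NormedAddCommGroup E] [NormedSpace ℝ E]
    {c : ι → ℝ} (hc : ∀ i, c i ≠ 0) (h : (ι → ℝ) → E) :
    ∫ y, h (c * y) = |∏ i, c i|⁻¹ • ∫ x, h x := by
  classical
  have hdet : (Matrix.diagonal c).det ≠ 0 := by
    rw [Matrix.det_diagonal]
    exact Finset.prod_ne_zero_iff.2 fun i _ => hc i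
  have hemb : MeasurableEmbedding (fun y : ι → ℝ => c * y) :=
    (Homeomorph.piCongrRight fun i => Homeomorph.mulLeft₀ (c i) (hc i)).measurableEmbedding
  have hmap : Measure.map (fun y : ι → ℝ => c * y) volume
      = ENNReal.ofReal |∏ i, c i|⁻¹ • volume := by
    have h := Real.map_matrix_volume_pi_eq_smul_volume_pi hdet
    rw [Matrix.det_diagonal, abs_inv] at h
    rw [← h]
    congr 1 with y i
    simp [Matrix.mulVec_diagonal]
  rw [← hemb.integral_map, hmap, integral_smul_measure, ENNReal.toReal_ofReal (by positivity)]

theorem tendsto_integral_comp_mul_mul {ι α : Type*} [Countable ι] {l : Filter α}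
    [l.IsCountablyGenerated] {μ : Measure (ι → ℝ)} {F w : (ι → ℝ) → ℝ} {s : α → ι → ℝ} {M : ℝ}
    (hF : Measurable F) (hFM : ∀ x, ‖F x‖ ≤ M) (hF0 : ContinuousAt F 0) (hw : Integrable w μ)
    (hs : Tendsto s l (𝓝 0)) :
    Tendsto (fun t => ∫ y, F (s t * y) * w y ∂μ) l (𝓝 (F 0 * ∫ y, w y ∂μ)) := by
  rw [← integral_const_mul]
  refine tendsto_integral_filter_of_dominated_convergence (fun y => M * ‖w y‖)
    (Eventually.of_forall fun t => ?_) (Eventually.of_forall fun t => ?_) (hw.norm.const_mul M)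
    (Eventually.of_forall fun y => ?_)
  · exact (hF.comp (continuous_const.mul continuous_id).measurable).aestronglyMeasurable.mul
      hw.aestronglyMeasurable
  · refine Eventually.of_forall fun y => ?_
    rw [norm_mul]
    exact mul_le_mul_of_nonneg_right (hFM _) (norm_nonneg _)
  · have hsy : Tendsto (fun t => s t * y) l (𝓝 0) := by simpa using hs.mul_const y
    exact (hF0.tendsto.comp hsy).mul_const (w y)

theorem integrable_exp_neg_pow_two_mul {m : ℕ} (hm : 0 < m) :
    Integrable fun y : ℝ => exp (-y ^ (2 * m)) := by
  refine ((integrable_exp_neg_mul_sq one_pos).const_mul (exp 1)).mono'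
    (by fun_prop) (Eventually.of_forall fun y => ?_)
  have hy : y ^ 2 ≤ 1 + y ^ (2 * m) := by
    rw [pow_mul]
    rcases le_total (y ^ 2) 1 with h | h
    · nlinarith [pow_nonneg (sq_nonneg y) m]
    · nlinarith [le_self_pow₀ h hm.ne']
  rw [norm_of_nonneg (exp_pos _).le, ← exp_add]
  exact exp_le_exp.2 (by linarith)

theorem integral_exp_neg_pow_two_mul {m : ℕ} (hm : 0 < m) :
    ∫ y : ℝ, exp (-y ^ (2 * m)) = Gamma (1 / (2 * (m : ℝ))) / m := by
  have hm' : (0 : ℝ) < m := Nat.cast_pos.2 hm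
  have hIoi : ∫ y in Ioi (0 : ℝ), exp (-y ^ (2 * m)) = Gamma (1 / (2 * (m : ℝ)) + 1) := by
    rw [← integral_exp_neg_rpow (by positivity : (0 : ℝ) < 2 * m)]
    refine setIntegral_congr_fun measurableSet_Ioi fun y _ => ?_
    norm_cast
  calc ∫ y : ℝ, exp (-y ^ (2 * m)) = ∫ y : ℝ, exp (-|y| ^ (2 * m)) := by
        simp_rw [Even.pow_abs (even_two_mul m)]
    _ = 2 * Gamma (1 / (2 * (m : ℝ)) + 1) := by
        rw [integral_comp_abs (f := fun y => exp (-y ^ (2 * m))), hIoi]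
    _ = Gamma (1 / (2 * (m : ℝ))) / m := by
        rw [Gamma_add_one (by positivity)]
        field_simp

theorem rpow_one_div_two_mul_mul_pow {t : ℝ} (ht : 0 ≤ t) {m : ℕ} (hm : 0 < m) (y : ℝ) :
    (t ^ (1 / (2 * (m : ℝ))) * y) ^ (2 * m) = t * y ^ (2 * m) := by
  have h := rpow_inv_natCast_pow ht (n := 2 * m) (by omega)
  push_cast at h
  rw [mul_pow, one_div, h]

section Phase

variable {ι : Type*} [Fintype ι] {m : ι → ℕ}

theorem integrable_exp_neg_sum_pow (hm : ∀ i, 0 < m i) :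
    Integrable fun y : ι → ℝ => exp (-∑ i, y i ^ (2 * m i)) := by
  simp_rw [← Finset.sum_neg_distrib, exp_sum]
  exact Integrable.fintype_prod fun i => integrable_exp_neg_pow_two_mul (hm i)

theorem integral_exp_neg_sum_pow (hm : ∀ i, 0 < m i) :
    ∫ y : ι → ℝ, exp (-∑ i, y i ^ (2 * m i)) = ∏ i, Gamma (1 / (2 * (m i : ℝ))) / m i := by
  simp_rw [← Finset.sum_neg_distrib, exp_sum]
  rw [integral_fintype_prod_volume_eq_prod (fun i y => exp (-y ^ (2 * m i)))]
  exact Finset.prod_congr rfl fun i _ => integral_exp_neg_pow_two_mul (hm i)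

theorem rpow_neg_mul_setIntegral_mul_exp_neg_sum_pow_div (hm : ∀ i, 0 < m i) {D : Set (ι → ℝ)}
    (hD : MeasurableSet D) (f : (ι → ℝ) → ℝ) {t : ℝ} (ht : 0 < t) :
    t ^ (-∑ i, 1 / (2 * (m i : ℝ))) * ∫ x in D, f x * exp (-(∑ i, x i ^ (2 * m i)) / t)
      = ∫ y, D.indicator f ((fun i => t ^ (1 / (2 * (m i : ℝ)))) * y)
          * exp (-∑ i, y i ^ (2 * m i)) := by
  set s : ι → ℝ := fun i => t ^ (1 / (2 * (m i : ℝ)))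
  have hprod : ∏ i, s i = t ^ ∑ i, 1 / (2 * (m i : ℝ)) := (rpow_sum_of_pos ht _ _).symm
  have hphase (y : ι → ℝ) : -(∑ i, (s * y) i ^ (2 * m i)) / t = -∑ i, y i ^ (2 * m i) := by
    simp only [Pi.mul_apply, s, rpow_one_div_two_mul_mul_pow ht.le (hm _), ← Finset.mul_sum]
    field_simp
  rw [← integral_indicator hD, rpow_neg ht.le, ← hprod,
    ← abs_of_pos (Finset.prod_pos fun i _ => rpow_pos_of_pos ht _ : 0 < ∏ i, s i),
    ← smul_eq_mul, ← integral_comp_mul_pi fun i => (rpow_pos_of_pos ht _).ne']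
  congr 1 with y
  simp only [s] at hphase ⊢
  rw [indicator_mul_left, hphase]

end Phase

theorem laplace_asymptotic_multidim_general (n : ℕ) (m : Fin n → ℕ) (hm : ∀ i, 1 ≤ m i)
    (a : ℝ) (ha : 0 < a) (f : (Fin n → ℝ) → ℝ)
    (hf : ContinuousOn f (Set.pi Set.univ fun _ => Set.Icc (-a) a)) :
    Tendsto
      (fun t : ℝ =>
        t ^ (-(∑ i, 1 / (2 * (m i : ℝ)))) *
          ∫ x in Set.pi Set.univ (fun _ : Fin n => Set.Icc (-a) a),
            f x * Real.exp (-(∑ i, x i ^ (2 * m i)) / t))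
      (nhdsWithin 0 (Set.Ioi 0))
      (nhds (f 0 * ∏ i, Real.Gamma (1 / (2 * (m i : ℝ))) / m i)) := by
  set D := Set.pi Set.univ fun _ : Fin n => Set.Icc (-a) a
  have hDmeas : MeasurableSet D := MeasurableSet.univ_pi fun _ => measurableSet_Icc
  have hD : D ∈ 𝓝 0 := set_pi_mem_nhds finite_univ fun _ _ => Icc_mem_nhds (neg_lt_zero.2 ha) ha
  have h0 : (0 : Fin n → ℝ) ∈ D := mem_of_mem_nhds hD
  obtain ⟨M, hM⟩ := (isCompact_univ_pi fun _ => isCompact_Icc).exists_bound_of_continuousOn hf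
  have hbound (x : Fin n → ℝ) : ‖D.indicator f x‖ ≤ M := by
    rw [norm_indicator_eq_indicator_norm]
    exact indicator_apply_le' (hM x) fun _ => (norm_nonneg _).trans (hM 0 h0)
  have hlim := tendsto_integral_comp_mul_mul (hf.measurable_indicator hDmeas) hbound
    ((hf 0 h0).continuousAt_indicator hD) (integrable_exp_neg_sum_pow hm)
    (tendsto_pi_nhds.2 fun i =>
      tendsto_rpow_nhdsGT_zero (p := 1 / (2 * (m i : ℝ))) (by have := hm i; positivity))
  rw [indicator_of_mem h0, integral_exp_neg_sum_pow hm] at hlim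
  refine hlim.congr' ?_
  filter_upwards [self_mem_nhdsWithin] with t ht
  exact (rpow_neg_mul_setIntegral_mul_exp_neg_sum_pow_div hm hDmeas f ht).symm

/-- Multidimensional Laplace asymptotics with diagonal monomial phase
`g(x) = Σ_i x_i^{2 m_i}` on the box `[-a,a]ⁿ`:
`t^{-Σ 1/(2mᵢ)} ∫_D f(x) e^{-g(x)/t} dx → f(0)·∏ Γ(1/(2mᵢ))/mᵢ` as `t → 0⁺`. -/
theorem laplace_asymptotic_multidim (n : ℕ) (m : Fin n → ℕ) (hm : ∀ i, 1 ≤ m i)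
    (hmono : ∀ i j : Fin n, i ≤ j → m i ≤ m j)
    (a : ℝ) (ha : 0 < a) (f : (Fin n → ℝ) → ℝ)
    (hf : ContinuousOn f (Set.pi Set.univ fun _ => Set.Icc (-a) a)) :
    Tendsto
      (fun t : ℝ =>
        t ^ (-(∑ i, 1 / (2 * (m i : ℝ)))) *
          ∫ x in Set.pi Set.univ (fun _ : Fin n => Set.Icc (-a) a),
            f x * Real.exp (-(∑ i, x i ^ (2 * m i)) / t))
      (nhdsWithin 0 (Set.Ioi 0))
      (nhds (f 0 * ∏ i, Real.Gamma (1 / (2 * (m i : ℝ))) / m i)) :=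
  laplace_asymptotic_multidim_general n m hm a ha f hf
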